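/- arXiv:1405.1852 — 2 statements merged into one kernel-verified Lean document; each statement's English description precedes it below -/
import Mathlib

section
/- Let U = ∑_k λ_k P_k be a unitary operator on a Hilbert space with pure point spectrum, where the P_k are mutually orthogonal projections summing to the identity and |λ_k| = 1 with distinct λ_k. Then for any bounded operator A, the Cesàro averages (1/N) ∑_{i=0}^{N−1} U^i A (U^i)† converge strongly to ∑_k P_k A P_k. -/
/-!
On the range of `P k` the adjoint `U⋆` acts as `conj (lam k)`, so there the Cesàro average is the
Birkhoff average of `A (P k x)` under the isometry `conj (lam k) • U`. By von Neumann's mean ergodic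
theorem it converges to the orthogonal projection onto the fixed space of that isometry, which is
the range of `P k` because the eigenvalues are distinct. Since the averages are bounded by `‖A‖`
uniformly in `N`, convergence at each `P k x` gives convergence at `x = ∑ k, P k x`.
-/

open Filter Topology ComplexConjugate

section StrongConvergence

variable {𝕜 E F α ι : Type*} [NontriviallyNormedField 𝕜]
  [NormedAddCommGroup E] [NormedSpace 𝕜 E] [NormedAddCommGroup F] [NormedSpace 𝕜 F]

theorem ContinuousLinearMap.tendsto_apply_of_hasSum {l : Filter α} {T : α → E →L[𝕜] F} {C : ℝ}
    (hT : ∀ a, ‖T a‖ ≤ C) (S : E →L[𝕜] F) {v : ι → E} {x : E} (hx : HasSum v x)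
    (hv : ∀ k, Tendsto (fun a => T a (v k)) l (𝓝 (S (v k)))) :
    Tendsto (fun a => T a x) l (𝓝 (S x)) := by
  have hequi : Equicontinuous fun a => (T a : E → F) :=
    ((NormedSpace.equicontinuous_TFAE T).out 5 1).mp (⟨C, hT⟩ : ∃ C, ∀ a, ‖T a‖ ≤ C)
  refine (hequi.isClosed_setOfPred_tendsto S.continuous).mem_of_tendsto hx
    (Eventually.of_forall fun s => ?_)
  simp only [Set.mem_ofPred_eq, map_sum]
  exact tendsto_finsetSum s fun k _ => hv k

end StrongConvergence

section SpectralDecomposition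

variable {𝕜 E ι : Type*} [NormedField 𝕜] [NormedAddCommGroup E] [NormedSpace 𝕜 E]
  {P : ι → E →L[𝕜] E} {lam : ι → 𝕜} {U : E →L[𝕜] E}

theorem proj_apply_proj_self (hP_idem : ∀ k, P k * P k = P k) (k : ι) (x : E) :
    P k (P k x) = P k x :=
  congr($(hP_idem k) x)

theorem proj_apply_proj_of_ne (hP_orth : ∀ k j, k ≠ j → P k * P j = 0) {k j : ι} (hkj : k ≠ j)
    (x : E) : P k (P j x) = 0 :=
  congr($(hP_orth k j hkj) x)

theorem mul_proj_eq_smul (hP_idem : ∀ k, P k * P k = P k)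
    (hP_orth : ∀ k j, k ≠ j → P k * P j = 0) (hU : ∀ x, HasSum (fun k => lam k • P k x) (U x))
    (j : ι) : U * P j = lam j • P j := by
  ext x
  refine (hU (P j x)).unique ?_
  convert hasSum_single j fun k hk => ?_ using 1
  · simp [proj_apply_proj_self hP_idem]
  · simp [proj_apply_proj_of_ne hP_orth hk]

theorem proj_mul_eq_smul (hP_idem : ∀ k, P k * P k = P k)
    (hP_orth : ∀ k j, k ≠ j → P k * P j = 0) (hU : ∀ x, HasSum (fun k => lam k • P k x) (U x))
    (j : ι) : P j * U = lam j • P j := by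
  ext x
  refine ((hU x).mapL (P j)).unique ?_
  convert hasSum_single j fun k hk => ?_ using 1
  · simp [proj_apply_proj_self hP_idem]
  · simp [proj_apply_proj_of_ne hP_orth (Ne.symm hk)]

theorem apply_eq_smul_iff_proj_apply_eq_self (hP_idem : ∀ k, P k * P k = P k)
    (hP_orth : ∀ k j, k ≠ j → P k * P j = 0) (hP_sum : ∀ x, HasSum (fun k => P k x) x)
    (hU : ∀ x, HasSum (fun k => lam k • P k x) (U x)) (hlam : Function.Injective lam)
    (j : ι) (v : E) : U v = lam j • v ↔ P j v = v := by
  constructor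
  · intro hv
    have hzero : ∀ k, k ≠ j → P k v = 0 := fun k hk => by
      have h : lam k • P k v = lam j • P k v := by
        rw [← smul_apply, ← proj_mul_eq_smul hP_idem hP_orth hU,
          mul_apply_eq_comp, hv, map_smul]
      rw [← sub_eq_zero, ← sub_smul, smul_eq_zero, sub_eq_zero] at h
      exact h.resolve_left (hlam.ne hk)
    exact ((hP_sum v).unique (hasSum_single j hzero)).symm
  · intro hv
    simpa [hv] using congr($(mul_proj_eq_smul hP_idem hP_orth hU j) v)

end SpectralDecomposition

section Adjoint

variable {𝕜 E ι : Type*} [RCLike 𝕜] [NormedAddCommGroup E] [InnerProductSpace 𝕜 E]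
  [CompleteSpace E] {P : ι → E →L[𝕜] E} {lam : ι → 𝕜} {U : E →L[𝕜] E}

theorem star_mul_proj_eq_smul (hP_selfadj : ∀ k, IsSelfAdjoint (P k))
    (hP_idem : ∀ k, P k * P k = P k) (hP_orth : ∀ k j, k ≠ j → P k * P j = 0)
    (hU : ∀ x, HasSum (fun k => lam k • P k x) (U x)) (j : ι) :
    star U * P j = conj (lam j) • P j := by
  have h := congr(star $(proj_mul_eq_smul hP_idem hP_orth hU j))
  rwa [star_mul, star_smul, (hP_selfadj j).star_eq] at h

theorem star_mul_self_eq_one_of_hasSum (hP_selfadj : ∀ k, IsSelfAdjoint (P k))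
    (hP_idem : ∀ k, P k * P k = P k) (hP_orth : ∀ k j, k ≠ j → P k * P j = 0)
    (hP_sum : ∀ x, HasSum (fun k => P k x) x) (hU : ∀ x, HasSum (fun k => lam k • P k x) (U x))
    (hlam_mod : ∀ k, ‖lam k‖ = 1) : star U * U = 1 := by
  ext x
  rw [one_apply_eq_self]
  refine ((hU x).mapL (star U)).unique ?_
  convert hP_sum x using 2 with k
  rw [map_smul, ← mul_apply_eq_comp, star_mul_proj_eq_smul hP_selfadj hP_idem hP_orth hU,
    smul_apply, smul_smul, RCLike.mul_conj, hlam_mod, RCLike.ofReal_one, one_pow, one_smul]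

theorem norm_pow_apply_of_star_mul_self_eq_one (hU : star U * U = 1) (n : ℕ) (x : E) :
    ‖(U ^ n) x‖ = ‖x‖ := by
  have hisom := (U.norm_map_iff_adjoint_comp_self).mpr hU
  induction n generalizing x with
  | zero => rfl
  | succ n ih => rw [pow_succ, mul_apply_eq_comp, ih, hisom]

theorem norm_pow_le_one_of_star_mul_self_eq_one (hU : star U * U = 1) (n : ℕ) : ‖U ^ n‖ ≤ 1 :=
  (U ^ n).opNorm_le_bound zero_le_one fun x => by
    rw [norm_pow_apply_of_star_mul_self_eq_one hU, one_mul]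

theorem tendsto_birkhoffAverage_conj_smul_of_hasSum (hP_selfadj : ∀ k, IsSelfAdjoint (P k))
    (hP_idem : ∀ k, P k * P k = P k) (hP_orth : ∀ k j, k ≠ j → P k * P j = 0)
    (hP_sum : ∀ x, HasSum (fun k => P k x) x) (hU : ∀ x, HasSum (fun k => lam k • P k x) (U x))
    (hlam_mod : ∀ k, ‖lam k‖ = 1) (hlam_inj : Function.Injective lam) (j : ι) (w : E) :
    Tendsto (fun N => birkhoffAverage 𝕜 (conj (lam j) • U) _root_.id N w) atTop (𝓝 (P j w)) := by
  have hnorm : ‖conj (lam j) • U‖ ≤ 1 := by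
    rw [norm_smul, RCLike.norm_conj, hlam_mod, one_mul]
    simpa using norm_pow_le_one_of_star_mul_self_eq_one
      (star_mul_self_eq_one_of_hasSum hP_selfadj hP_idem hP_orth hP_sum hU hlam_mod) 1
  have hfix : (conj (lam j) • U).eqLocus 1 = (P j).range := by
    ext v
    have hlam_ne : lam j ≠ 0 := norm_ne_zero_iff.mp ((hlam_mod j).trans_ne one_ne_zero)
    rw [LinearMap.IsIdempotentElem.mem_range_iff
        (ContinuousLinearMap.IsIdempotentElem.toLinearMap (hP_idem j)),
      ContinuousLinearMap.coe_coe,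
      ← apply_eq_smul_iff_proj_apply_eq_self hP_idem hP_orth hP_sum hU hlam_inj,
      ← RCLike.inv_eq_conj (hlam_mod j), ← inv_smul_eq_iff₀ hlam_ne]
    simp
  obtain ⟨_, hP⟩ := isStarProjection_iff_eq_starProjection_range.mp ⟨hP_idem j, hP_selfadj j⟩
  have hlim := (conj (lam j) • U).tendsto_birkhoffAverage_orthogonalProjection hnorm w
  rw [Submodule.coe_orthogonalProjectionOnto_apply] at hlim
  convert hlim using 3
  rw [hP]
  congr 1
  exact hfix.symm

end Adjoint

section CesaroConj

variable {𝕜 E : Type*} [RCLike 𝕜] [NormedAddCommGroup E] [InnerProductSpace 𝕜 E]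
  [CompleteSpace E]

noncomputable def cesaroConj (U A : E →L[𝕜] E) (N : ℕ) : E →L[𝕜] E :=
  (N : 𝕜)⁻¹ • ∑ i ∈ Finset.range N, U ^ i * A * star (U ^ i)

theorem cesaroConj_apply (U A : E →L[𝕜] E) (N : ℕ) (x : E) :
    cesaroConj U A N x = (N : 𝕜)⁻¹ • ∑ i ∈ Finset.range N, (U ^ i * A * star (U ^ i)) x := by
  simp [cesaroConj]

theorem norm_cesaroConj_le {U : E →L[𝕜] E} (hU : star U * U = 1) (A : E →L[𝕜] E) (N : ℕ) :
    ‖cesaroConj U A N‖ ≤ ‖A‖ := by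
  have hterm : ∀ i, ‖U ^ i * A * star (U ^ i)‖ ≤ ‖A‖ := fun i =>
    calc ‖U ^ i * A * star (U ^ i)‖ ≤ ‖U ^ i‖ * ‖A‖ * ‖star (U ^ i)‖ := norm_mul₃_le
      _ ≤ 1 * ‖A‖ * 1 := by
        rw [norm_star (U ^ i)]
        gcongr <;> exact norm_pow_le_one_of_star_mul_self_eq_one hU i
      _ = ‖A‖ := by ring
  calc ‖cesaroConj U A N‖ ≤ ‖(N : 𝕜)⁻¹‖ * (N * ‖A‖) := by
        rw [cesaroConj, norm_smul]
        gcongr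
        simpa using norm_sum_le_of_le (Finset.range N) fun i _ => hterm i
    _ ≤ ‖A‖ := by
        rcases N.eq_zero_or_pos with rfl | hN
        · simp
        · rw [norm_inv, RCLike.norm_natCast, inv_mul_cancel_left₀ (by positivity)]

theorem cesaroConj_apply_of_star_apply_eq_smul {U : E →L[𝕜] E} {c : 𝕜} {v : E}
    (hv : star U v = c • v) (A : E →L[𝕜] E) (N : ℕ) :
    cesaroConj U A N v = birkhoffAverage 𝕜 (c • U) _root_.id N (A v) := by
  have hpow : ∀ i : ℕ, (star U ^ i) v = c ^ i • v := fun i => by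
    induction i with
    | zero => simp
    | succ i ih => rw [pow_succ, mul_apply_eq_comp, hv, map_smul, ih, smul_smul, ← pow_succ']
  rw [cesaroConj_apply, birkhoffAverage, birkhoffSum]
  congr 1
  refine Finset.sum_congr rfl fun i _ => ?_
  rw [← FunLike.coe_pow_eq_iterate, smul_pow, star_pow, mul_apply_eq_comp, mul_apply_eq_comp,
    hpow, map_smul, map_smul, smul_apply, id]

end CesaroConj

theorem cesaro_tendsto_diagonal_part_general
    {H : Type*} [NormedAddCommGroup H] [InnerProductSpace ℂ H] [CompleteSpace H]
    {ι : Type*}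
    (P : ι → H →L[ℂ] H)
    (hP_selfadj : ∀ k, IsSelfAdjoint (P k))
    (hP_idem : ∀ k, P k * P k = P k)
    (hP_orth : ∀ k j, k ≠ j → P k * P j = 0)
    (hP_sum : ∀ x : H, HasSum (fun k => P k x) x)
    (lam : ι → ℂ)
    (hlam_mod : ∀ k, ‖lam k‖ = 1)
    (hlam_inj : Function.Injective lam)
    (U : H →L[ℂ] H)
    (hU : ∀ x : H, HasSum (fun k => lam k • P k x) (U x))
    (A : H →L[ℂ] H)
    (S : H →L[ℂ] H)
    (hS : ∀ x : H, HasSum (fun k => P k (A (P k x))) (S x)) :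
    ∀ x : H, Filter.Tendsto
      (fun N : ℕ => (N : ℂ)⁻¹ • ∑ i ∈ Finset.range N, (U ^ i * A * star (U ^ i)) x)
      Filter.atTop (nhds (S x)) := by
  intro x
  have hS_proj : ∀ j y, S (P j y) = P j (A (P j y)) := fun j y => by
    refine (hS (P j y)).unique ?_
    convert hasSum_single j fun k hk => ?_ using 1
    · rw [proj_apply_proj_self hP_idem]
    · rw [proj_apply_proj_of_ne hP_orth hk, map_zero, map_zero]
  have hisom := star_mul_self_eq_one_of_hasSum hP_selfadj hP_idem hP_orth hP_sum hU hlam_mod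
  simp_rw [← cesaroConj_apply]
  refine ContinuousLinearMap.tendsto_apply_of_hasSum (norm_cesaroConj_le hisom A) S (hP_sum x)
    fun j => ?_
  have hstar : star U (P j x) = conj (lam j) • P j x :=
    congr($(star_mul_proj_eq_smul hP_selfadj hP_idem hP_orth hU j) x)
  simp_rw [cesaroConj_apply_of_star_apply_eq_smul hstar, hS_proj]
  exact tendsto_birkhoffAverage_conj_smul_of_hasSum hP_selfadj hP_idem hP_orth hP_sum hU
    hlam_mod hlam_inj j _

/-- For a unitary `U = ∑ₖ λₖ Pₖ` with pure point spectrum, the Cesàro averages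
`(1/N) ∑ᵢ Uⁱ A (Uⁱ)†` converge strongly to `∑ₖ Pₖ A Pₖ`. -/
theorem cesaro_tendsto_diagonal_part
    {H : Type*} [NormedAddCommGroup H] [InnerProductSpace ℂ H] [CompleteSpace H]
    {ι : Type*} [Countable ι]
    (P : ι → H →L[ℂ] H)
    (hP_selfadj : ∀ k, IsSelfAdjoint (P k))
    (hP_idem : ∀ k, P k * P k = P k)
    (hP_orth : ∀ k j, k ≠ j → P k * P j = 0)
    (hP_sum : ∀ x : H, HasSum (fun k => P k x) x)
    (lam : ι → ℂ)
    (hlam_mod : ∀ k, ‖lam k‖ = 1)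
    (hlam_inj : Function.Injective lam)
    (U : H →L[ℂ] H)
    (hU : ∀ x : H, HasSum (fun k => lam k • P k x) (U x))
    (A : H →L[ℂ] H)
    (S : H →L[ℂ] H)
    (hS : ∀ x : H, HasSum (fun k => P k (A (P k x))) (S x)) :
    ∀ x : H, Filter.Tendsto
      (fun N : ℕ => (N : ℂ)⁻¹ • ∑ i ∈ Finset.range N, (U ^ i * A * star (U ^ i)) x)
      Filter.atTop (nhds (S x)) :=
  cesaro_tendsto_diagonal_part_general P hP_selfadj hP_idem hP_orth hP_sum lam hlam_mod hlam_inj U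
    hU A S hS
end

section
/- Let H be a Hilbert space, H₀ a bounded self-adjoint operator, (u_n) unitary operators on H, and for N ≥ 1, t ∈ ℝ define the unitary U_N(t) = ∏_{n=0}^{N−1} u_{N−n} e^{−iH₀ t/N}. Then for any bounded operator ρ, with ρ_N(t) = U_N(t) ρ U_N(t)†, one has ‖ρ_N(t) − ρ_{N+1}(t)‖ ≤ 2‖ρ‖ (e^{2‖H₀‖|t|/N} − 1) + ‖ρ_N(t) − u_{N+1} ρ_N(t) u_{N+1}†‖, where ‖·‖ is the operator norm. -/
/-!
Conjugation by a unitary is an isometry, so replacing `ρ_{N+1}` by `u_{N+1} ρ_N u_{N+1}†` costs at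
most `2‖ρ‖ ‖u_{N+1} U_N - U_{N+1}‖`. Both `u_{N+1} U_N` and `U_{N+1}` are products of `N + 1`
unitaries which differ factorwise only in the free evolution: once `1` against `e^{-iH₀t/(N+1)}`,
and `N` times `e^{-iH₀t/N}` against `e^{-iH₀t/(N+1)}`. Telescoping bounds the difference of the
products by the sum of the factorwise differences, each at most `e^{‖H₀‖ |Δs|} - 1`, and
superadditivity of `x ↦ e^x - 1` collects the sum into `e^{2‖H₀‖|t|/(N+1)} - 1`.
-/

open scoped ComplexOrder

noncomputable def pulseEvolution
    {H : Type*} [NormedAddCommGroup H] [InnerProductSpace ℂ H] [CompleteSpace H]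
    (u : ℕ → H →L[ℂ] H) (H₀ : H →L[ℂ] H) (N : ℕ) (t : ℝ) : H →L[ℂ] H :=
  ((List.range N).map (fun n =>
    u (N - n) * NormedSpace.exp ((-(Complex.I) * ((t / N : ℝ) : ℂ)) • H₀))).prod

open NormedSpace
open scoped Nat

theorem Real.exp_sub_one_add_exp_sub_one_le {x y : ℝ} (hx : 0 ≤ x) (hy : 0 ≤ y) :
    (Real.exp x - 1) + (Real.exp y - 1) ≤ Real.exp (x + y) - 1 := by
  rw [Real.exp_add]
  nlinarith [Real.one_le_exp hx, Real.one_le_exp hy]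

theorem Real.nat_mul_exp_sub_one_le (n : ℕ) (x : ℝ) :
    n * (Real.exp x - 1) ≤ Real.exp (n * x) - 1 := by
  have h := one_add_mul_le_pow (a := Real.exp x - 1) (by linarith [Real.exp_pos x]) n
  rw [add_sub_cancel, ← Real.exp_nat_mul] at h
  linarith

theorem NormedSpace.norm_exp_sub_one_le {𝔸 : Type*} [NormedRing 𝔸] [NormedAlgebra ℚ 𝔸]
    [CompleteSpace 𝔸] (x : 𝔸) : ‖exp x - 1‖ ≤ Real.exp ‖x‖ - 1 := by
  have hx := (exp_series_hasSum_exp' (𝕂 := ℚ) x).sub (hasSum_ite_eq 0 (1 : 𝔸))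
  have hr := (Real.exp_eq_exp_ℝ ▸ expSeries_div_hasSum_exp ‖x‖).sub (hasSum_ite_eq 0 (1 : ℝ))
  refine hx.norm_le_of_bounded hr fun n => ?_
  rcases n with _ | n
  · simp
  · simp only [Nat.add_one_ne_zero, if_false, sub_zero]
    calc ‖((n + 1)! : ℚ)⁻¹ • x ^ (n + 1)‖ ≤ ‖((n + 1)! : ℚ)⁻¹‖ * ‖x ^ (n + 1)‖ := norm_smul_le _ _
      _ ≤ ((n + 1)! : ℝ)⁻¹ * ‖x‖ ^ (n + 1) := by
        rw [norm_inv, ← Rat.norm_cast_real, Rat.cast_natCast, Real.norm_natCast]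
        gcongr
        exact norm_pow_le' x n.succ_pos
      _ = ‖x‖ ^ (n + 1) / (n + 1)! := by rw [inv_mul_eq_div]

section CStarRing

variable {E : Type*} [NormedRing E] [StarRing E] [CStarRing E]

theorem CStarRing.norm_list_prod_map_sub_le {ι : Type*} {f g : ι → E} {ε : ℝ} (l : List ι)
    (hf : ∀ i ∈ l, f i ∈ unitary E) (hg : ∀ i ∈ l, g i ∈ unitary E)
    (hε : ∀ i ∈ l, ‖f i - g i‖ ≤ ε) :
    ‖(l.map f).prod - (l.map g).prod‖ ≤ l.length * ε := by
  induction l with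
  | nil => simp
  | cons i l ih =>
    simp only [List.mem_cons, forall_eq_or_imp] at hf hg hε
    have hP : (l.map f).prod ∈ unitary E := list_prod_mem (by simpa using hf.2)
    have hsplit : f i * (l.map f).prod - g i * (l.map g).prod
        = (f i - g i) * (l.map f).prod + g i * ((l.map f).prod - (l.map g).prod) := by
      noncomm_ring
    simp only [List.map_cons, List.prod_cons, List.length_cons, hsplit]
    calc _ ≤ ‖(f i - g i) * (l.map f).prod‖ + ‖g i * ((l.map f).prod - (l.map g).prod)‖ :=
          norm_add_le _ _
      _ = ‖f i - g i‖ + ‖(l.map f).prod - (l.map g).prod‖ := by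
          rw [norm_mul_mem_unitary _ hP, norm_mem_unitary_mul _ hg.1]
      _ ≤ ε + l.length * ε := add_le_add hε.1 (ih hf.2 hg.2 hε.2)
      _ = _ := by push_cast; ring

theorem CStarRing.norm_conj_sub_conj_le {a b : E} (ha : a ∈ unitary E) (hb : b ∈ unitary E)
    (ρ : E) : ‖a * ρ * star a - b * ρ * star b‖ ≤ 2 * ‖ρ‖ * ‖a - b‖ := by
  have hsplit : a * ρ * star a - b * ρ * star b
      = (a - b) * ρ * star a + b * (ρ * star (a - b)) := by
    rw [star_sub]; noncomm_ring
  calc _ ≤ ‖(a - b) * ρ * star a‖ + ‖b * (ρ * star (a - b))‖ := hsplit ▸ norm_add_le _ _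
    _ ≤ ‖a - b‖ * ‖ρ‖ + ‖ρ‖ * ‖a - b‖ := by
      rw [norm_mul_mem_unitary _ (Unitary.star_mem ha), norm_mem_unitary_mul _ hb]
      grw [norm_mul_le, norm_mul_le, norm_star]
    _ = _ := by ring

end CStarRing

section freeEvolution

variable {A : Type*} [CStarAlgebra A]

noncomputable def freeEvolution (a : A) (s : ℝ) : A := exp ((-Complex.I * s) • a)

theorem freeEvolution_zero (a : A) : freeEvolution a 0 = 1 := by
  simp [freeEvolution]

theorem freeEvolution_add (a : A) (s r : ℝ) :
    freeEvolution a (s + r) = freeEvolution a s * freeEvolution a r := by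
  let : NormedAlgebra ℚ A := .restrictScalars ℚ ℂ A
  rw [freeEvolution, freeEvolution, freeEvolution, ← exp_add_of_commute
    (((Commute.refl a).smul_left _).smul_right _), ← add_smul]
  push_cast
  ring_nf

theorem freeEvolution_mem_unitary {a : A} (ha : IsSelfAdjoint a) (s : ℝ) :
    freeEvolution a s ∈ unitary A := by
  let : NormedAlgebra ℚ A := .restrictScalars ℚ ℂ A
  refine exp_mem_unitary_of_mem_skewAdjoint (ha.smul_mem_skewAdjoint ?_)
  simp [skewAdjoint.mem_iff]

theorem norm_freeEvolution_sub_le {a : A} (ha : IsSelfAdjoint a) (s r : ℝ) :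
    ‖freeEvolution a s - freeEvolution a r‖ ≤ Real.exp (|s - r| * ‖a‖) - 1 := by
  let : NormedAlgebra ℚ A := .restrictScalars ℚ ℂ A
  have hsplit : freeEvolution a s - freeEvolution a r
      = freeEvolution a r * (exp ((-Complex.I * (s - r : ℝ)) • a) - 1) := by
    rw [mul_sub, mul_one, ← freeEvolution, ← freeEvolution_add, add_sub_cancel]
  rw [hsplit, CStarRing.norm_mem_unitary_mul _ (freeEvolution_mem_unitary ha r)]
  refine (norm_exp_sub_one_le _).trans_eq ?_
  rw [norm_smul, norm_mul, norm_neg, Complex.norm_I, one_mul, Complex.norm_real, Real.norm_eq_abs]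

end freeEvolution

section pulseEvolution

variable {H : Type*} [NormedAddCommGroup H] [InnerProductSpace ℂ H] [CompleteSpace H]
  {u : ℕ → H →L[ℂ] H} {H₀ : H →L[ℂ] H}

theorem pulseEvolution_eq (N : ℕ) (t : ℝ) :
    pulseEvolution u H₀ N t
      = ((List.range N).map fun n => u (N - n) * freeEvolution H₀ (t / N)).prod :=
  rfl

theorem pulseEvolution_succ (N : ℕ) (t : ℝ) :
    pulseEvolution u H₀ (N + 1) t = u (N + 1) * freeEvolution H₀ (t / (N + 1))
      * ((List.range N).map fun n => u (N - n) * freeEvolution H₀ (t / (N + 1))).prod := by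
  rw [pulseEvolution_eq, List.range_succ_eq_map, List.map_cons, List.prod_cons, List.map_map]
  push_cast
  simp only [Function.comp_def, Nat.succ_sub_succ]

theorem prod_pulses_mem_unitary (hu : ∀ n, u n ∈ unitary (H →L[ℂ] H))
    (hH₀ : IsSelfAdjoint H₀) (N : ℕ) (s : ℝ) :
    ((List.range N).map fun n => u (N - n) * freeEvolution H₀ s).prod ∈ unitary (H →L[ℂ] H) := by
  refine list_prod_mem fun x hx => ?_
  obtain ⟨n, -, rfl⟩ := List.mem_map.mp hx
  exact mul_mem (hu _) (freeEvolution_mem_unitary hH₀ _)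

theorem pulseEvolution_mem_unitary (hu : ∀ n, u n ∈ unitary (H →L[ℂ] H))
    (hH₀ : IsSelfAdjoint H₀) (N : ℕ) (t : ℝ) :
    pulseEvolution u H₀ N t ∈ unitary (H →L[ℂ] H) :=
  prod_pulses_mem_unitary hu hH₀ N (t / N)

theorem norm_mul_pulseEvolution_sub_pulseEvolution_succ_le
    (hu : ∀ n, u n ∈ unitary (H →L[ℂ] H)) (hH₀ : IsSelfAdjoint H₀) (t : ℝ) {N : ℕ}
    (hN : 1 ≤ N) :
    ‖u (N + 1) * pulseEvolution u H₀ N t - pulseEvolution u H₀ (N + 1) t‖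
      ≤ Real.exp (2 * ‖H₀‖ * |t| / N) - 1 := by
  have hN₀ : (0 : ℝ) < N := by exact_mod_cast hN
  set E := freeEvolution H₀ (t / (N + 1))
  set P := ((List.range N).map fun n => u (N - n) * freeEvolution H₀ (t / N)).prod
  set Q := ((List.range N).map fun n => u (N - n) * E).prod
  have hdt : |t / N - t / (N + 1)| = |t| / (N * (N + 1)) := by
    rw [div_sub_div _ _ hN₀.ne' (by positivity), abs_div,
      abs_of_pos (by positivity : (0 : ℝ) < N * (N + 1))]
    congr 1
    ring_nf
  have hPQ : ‖P - Q‖ ≤ N * (Real.exp (|t| * ‖H₀‖ / (N * (N + 1))) - 1) := by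
    simpa using CStarRing.norm_list_prod_map_sub_le (List.range N)
      (fun _ _ => mul_mem (hu _) (freeEvolution_mem_unitary hH₀ _))
      (fun _ _ => mul_mem (hu _) (freeEvolution_mem_unitary hH₀ _))
      (fun _ _ => by
        rw [← mul_sub, CStarRing.norm_mem_unitary_mul _ (hu _), ← div_mul_eq_mul_div, ← hdt]
        exact norm_freeEvolution_sub_le hH₀ _ _)
  have hQE : ‖Q - E * Q‖ ≤ Real.exp (|t| * ‖H₀‖ / (N + 1)) - 1 := by
    rw [← one_sub_mul, CStarRing.norm_mul_mem_unitary _ (prod_pulses_mem_unitary hu hH₀ _ _),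
      ← freeEvolution_zero H₀]
    refine (norm_freeEvolution_sub_le hH₀ _ _).trans_eq ?_
    rw [zero_sub, abs_neg, abs_div, abs_of_pos (by positivity : (0 : ℝ) < N + 1),
      div_mul_eq_mul_div]
  calc _ = ‖P - E * Q‖ := by
        rw [pulseEvolution_succ, pulseEvolution_eq, mul_assoc, ← mul_sub,
          CStarRing.norm_mem_unitary_mul _ (hu _)]
    _ ≤ ‖P - Q‖ + ‖Q - E * Q‖ := norm_sub_le_norm_sub_add_norm_sub _ _ _
    _ ≤ (Real.exp (N * (|t| * ‖H₀‖ / (N * (N + 1)))) - 1)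
        + (Real.exp (|t| * ‖H₀‖ / (N + 1)) - 1) := by
      grw [hPQ, hQE, Real.nat_mul_exp_sub_one_le]
    _ ≤ Real.exp (2 * (|t| * ‖H₀‖ / (N + 1))) - 1 := by
      rw [mul_div_assoc', mul_div_mul_left _ _ hN₀.ne', two_mul]
      exact Real.exp_sub_one_add_exp_sub_one_le (by positivity) (by positivity)
    _ ≤ Real.exp (2 * ‖H₀‖ * |t| / N) - 1 := by
      gcongr
      rw [mul_div_assoc', mul_comm |t|, ← mul_assoc]
      gcongr
      linarith

end pulseEvolution

/-- One-step comparison inequality for imperfect decoupling sequences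
(Theorem 3 of Appendix B). -/
theorem decoupling_step_inequality
    {H : Type*} [NormedAddCommGroup H] [InnerProductSpace ℂ H] [CompleteSpace H]
    (u : ℕ → H →L[ℂ] H) (hu : ∀ n, u n ∈ unitary (H →L[ℂ] H))
    (H₀ : H →L[ℂ] H) (hH₀ : IsSelfAdjoint H₀)
    (ρ : H →L[ℂ] H) (t : ℝ) (N : ℕ) (hN : 1 ≤ N) :
    ‖pulseEvolution u H₀ N t * ρ * star (pulseEvolution u H₀ N t)
      - pulseEvolution u H₀ (N + 1) t * ρ * star (pulseEvolution u H₀ (N + 1) t)‖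
    ≤ 2 * ‖ρ‖ * (Real.exp (2 * ‖H₀‖ * |t| / N) - 1)
      + ‖pulseEvolution u H₀ N t * ρ * star (pulseEvolution u H₀ N t)
          - u (N + 1) * (pulseEvolution u H₀ N t * ρ * star (pulseEvolution u H₀ N t))
            * star (u (N + 1))‖ := by
  set U := pulseEvolution u H₀ N t
  set V := pulseEvolution u H₀ (N + 1) t
  have hconj : u (N + 1) * (U * ρ * star U) * star (u (N + 1))
      = u (N + 1) * U * ρ * star (u (N + 1) * U) := by
    simp only [star_mul, mul_assoc]
  calc _ ≤ ‖U * ρ * star U - u (N + 1) * (U * ρ * star U) * star (u (N + 1))‖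
        + ‖u (N + 1) * (U * ρ * star U) * star (u (N + 1)) - V * ρ * star V‖ :=
        norm_sub_le_norm_sub_add_norm_sub _ _ _
    _ ≤ ‖U * ρ * star U - u (N + 1) * (U * ρ * star U) * star (u (N + 1))‖
        + 2 * ‖ρ‖ * ‖u (N + 1) * U - V‖ := by
      rw [hconj]
      grw [CStarRing.norm_conj_sub_conj_le
        (mul_mem (hu _) (pulseEvolution_mem_unitary hu hH₀ N t))
        (pulseEvolution_mem_unitary hu hH₀ (N + 1) t)]
    _ ≤ _ := by
      grw [norm_mul_pulseEvolution_sub_pulseEvolution_succ_le hu hH₀ t hN, add_comm]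
end
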